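/- For every internal inductive game tree T, every action a ∈ A(T), and any baseline assignment b, the variance of the baseline-corrected action value is bounded by a weighted sum of squared baseline errors over all edges at or below the edge (root, a): Var_z[v̂(T, a; z)] ≤ Σ_{(h, a')} [ (π^σ(T_a-root, h·a'))² / π^q(h·a') ] · (û(h_{a'}) − b_h(a'))², where the sum ranges over the pair (root, a) itself together with all pairs (h, a') with h an internal node of the subtree T_a and a' ∈ A(h); here π^σ(T_a-root, h·a') is the product of σ-probabilities along the path from the root of T_a to the edge (h, a') (equal to 1 for the pair (root, a)), π^q(h·a') is the product of q-probabilities along the path from the root of T to the edge (h, a') (equal to q_T(a) for the pair (root, a)), û(h_{a'}) is the expected utility of the subtree reached from h by a', and b_h(a') is the baseline value stored at h for a'. -/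

import Mathlib

/-- An inductive game tree: either a leaf carrying a utility `u`, or an internal node
carrying a nonempty finite action set `Fin (n+1)`, a subtree `child a` for each action,
a strategy distribution `σ`, a sampling distribution `q`, and baseline values `b`. -/
inductive GameTree : Type
  | leaf (u : ℝ) : GameTree
  | node (n : ℕ) (child : Fin (n + 1) → GameTree)
      (σ : Fin (n + 1) → ℝ) (q : Fin (n + 1) → ℝ) (b : Fin (n + 1) → ℝ) : GameTree

namespace GameTree

/-- Expected utility `û`: `û(leaf u) = u` and `û(T) = Σ_a σ_T(a)·û(T_a)` at internal nodes. -/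
noncomputable def eu : GameTree → ℝ
  | leaf u => u
  | node n child σ _ _ => ∑ a : Fin (n + 1), σ a * eu (child a)

/-- Validity: at every internal node, `σ` is a probability distribution and `q` is a
probability distribution with `q a > 0` for every action `a`. -/
def Valid : GameTree → Prop
  | leaf _ => True
  | node n child σ q _ =>
      (∀ a, 0 ≤ σ a) ∧ (∑ a : Fin (n + 1), σ a = 1) ∧
      (∀ a, 0 < q a) ∧ (∑ a : Fin (n + 1), q a = 1) ∧
      (∀ a, Valid (child a))

/-- A sampled trajectory of `T`: a root-to-leaf path in the tree. -/
inductive Traj : GameTree → Type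
  | leaf (u : ℝ) : Traj (.leaf u)
  | step {n : ℕ} {child : Fin (n + 1) → GameTree} {σ q b : Fin (n + 1) → ℝ}
      (astar : Fin (n + 1)) (t : Traj (child astar)) : Traj (.node n child σ q b)

/-- Expectation `E_z[f(z)]` over the trajectory distribution (each trajectory has the
product of the `q`-probabilities of its edges as probability). -/
noncomputable def expT : (T : GameTree) → (Traj T → ℝ) → ℝ
  | leaf u, f => f (.leaf u)
  | node n child _ q _, f =>
      ∑ a : Fin (n + 1), q a * expT (child a) (fun t => f (.step a t))

/-- Variance `Var_z[f(z)]` over the trajectory distribution. -/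
noncomputable def varT (T : GameTree) (f : Traj T → ℝ) : ℝ :=
  expT T (fun z => (f z - expT T f) ^ 2)

/-- Baseline-corrected sampled value `v̂(T; z) = Σ_a σ_T(a)·v̂(T, a; z)`, with
`v̂(T, a; z) = (𝟙[a = a*]/q_T(a))·(v̂(T_a; z') − b_T(a)) + b_T(a)`. -/
noncomputable def bval : {T : GameTree} → Traj T → ℝ
  | _, .leaf u => u
  | _, @Traj.step n child σ q b astar t =>
      ∑ a : Fin (n + 1), σ a *
        ((if a = astar then (1 : ℝ) else 0) / q a * (bval t - b a) + b a)

/-- Baseline-corrected sampled action value `v̂(T, a; z)` at an internal root: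
`(𝟙[a = a*]/q_T(a))·(v̂(T_a; z') − b_T(a)) + b_T(a)` where `z = a*·z'`. -/
noncomputable def bvalAct {n : ℕ} {child : Fin (n + 1) → GameTree}
    {σ q b : Fin (n + 1) → ℝ}
    (a : Fin (n + 1)) : Traj (.node n child σ q b) → ℝ
  | .step astar t => (if a = astar then (1 : ℝ) else 0) / q a * (bval t - b a) + b a

/-- Weighted sum over all edges `(h, a')` of the tree of the squared baseline error,
`(πσ(h·a'))² / πq(h·a') · (û(h_{a'}) − b_h(a'))²`, where the accumulators `ps` and `pq`
carry the products of `σ`- and `q`-probabilities along the path down to the current root. -/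
noncomputable def errSum (ps pq : ℝ) : GameTree → ℝ
  | leaf _ => 0
  | node n child σ q b =>
      ∑ a : Fin (n + 1),
        ((ps * σ a) ^ 2 / (pq * q a) * (eu (child a) - b a) ^ 2
          + errSum (ps * σ a) (pq * q a) (child a))

end GameTree

namespace GameTree

theorem expT_add : ∀ (T : GameTree) (f g : Traj T → ℝ),
    expT T (fun z => f z + g z) = expT T f + expT T g
  | leaf u, f, g => rfl
  | node n child σ q b, f, g => by
    simp only [expT]
    rw [← Finset.sum_add_distrib]
    refine Finset.sum_congr rfl fun a _ => ?_
    rw [expT_add (child a)]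
    ring

theorem expT_affine : ∀ (T : GameTree), Valid T → ∀ (c d : ℝ) (f : Traj T → ℝ),
    expT T (fun z => c * f z + d) = c * expT T f + d
  | leaf u, _, c, d, f => rfl
  | node n child σ q b, hV, c, d, f => by
    obtain ⟨hσ0, hσ1, hq0, hq1, hVc⟩ := hV
    simp only [expT]
    have h : ∀ a ∈ Finset.univ, q a * expT (child a) (fun t => c * f (.step a t) + d)
        = c * (q a * expT (child a) fun t => f (.step a t)) + q a * d := by
      intro a _
      rw [expT_affine (child a) (hVc a)]
      ring
    rw [Finset.sum_congr rfl h, Finset.sum_add_distrib, ← Finset.mul_sum, ← Finset.sum_mul,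
      hq1]
    ring

theorem expT_sq_affine (T : GameTree) (hV : Valid T) (c d : ℝ) (f : Traj T → ℝ) :
    expT T (fun z => (c * f z + d) ^ 2)
      = c ^ 2 * expT T (fun z => f z ^ 2) + 2 * c * d * expT T f + d ^ 2 := by
  have h : (fun z => (c * f z + d) ^ 2)
      = fun z => (c ^ 2 * (f z ^ 2) + 0) + ((2 * c * d) * f z + d ^ 2) := by
    funext z; ring
  rw [h, expT_add, expT_affine T hV, expT_affine T hV]
  ring

theorem varT_eq (T : GameTree) (hV : Valid T) (f : Traj T → ℝ) :
    varT T f = expT T (fun z => f z ^ 2) - (expT T f) ^ 2 := by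
  have h : (fun z => (f z - expT T f) ^ 2) = fun z => (1 * f z + (-(expT T f))) ^ 2 := by
    funext z; ring
  rw [varT, h, expT_sq_affine T hV]
  ring

theorem bval_step {n : ℕ} {child : Fin (n + 1) → GameTree} {σ q b : Fin (n + 1) → ℝ}
    (astar : Fin (n + 1)) (t : Traj (child astar)) :
    bval (Traj.step astar t : Traj (.node n child σ q b))
      = σ astar / q astar * (bval t - b astar) + ∑ a : Fin (n + 1), σ a * b a := by
  simp only [bval]
  have h : ∀ a ∈ Finset.univ,
      σ a * ((if a = astar then (1:ℝ) else 0) / q a * (bval t - b a) + b a)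
      = (if a = astar then σ a / q a * (bval t - b a) else 0) + σ a * b a := by
    intro a _
    by_cases h : a = astar <;> simp [h] <;> ring
  rw [Finset.sum_congr rfl h, Finset.sum_add_distrib, Finset.sum_ite_eq' Finset.univ astar]
  simp

theorem expT_bval : ∀ (T : GameTree), Valid T → expT T bval = eu T
  | leaf u, _ => rfl
  | node n child σ q b, hV => by
    obtain ⟨hσ0, hσ1, hq0, hq1, hVc⟩ := hV
    simp only [expT, eu]
    have h : ∀ a ∈ Finset.univ,
        q a * expT (child a)
          (fun t => bval (Traj.step a t : Traj (.node n child σ q b)))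
        = σ a * eu (child a) - σ a * b a + q a * (∑ a' : Fin (n+1), σ a' * b a') := by
      intro a _
      have h2 : (fun t : Traj (child a) => bval (Traj.step a t : Traj (.node n child σ q b)))
          = fun t => σ a / q a * bval t
              + ((∑ a' : Fin (n+1), σ a' * b a') - σ a / q a * b a) := by
        funext t; rw [bval_step]; ring
      rw [h2, expT_affine (child a) (hVc a), expT_bval (child a) (hVc a)]
      have hq' := (hq0 a).ne'
      field_simp
      ring
    rw [Finset.sum_congr rfl h]
    rw [Finset.sum_add_distrib, Finset.sum_sub_distrib, ← Finset.sum_mul, hq1]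
    ring

theorem errSum_scale : ∀ (T : GameTree), Valid T → ∀ (ps pq : ℝ), 0 < pq →
    errSum ps pq T = ps ^ 2 / pq * errSum 1 1 T
  | leaf u, _, ps, pq, hpq => by simp [errSum]
  | node n child σ q b, hV, ps, pq, hpq => by
    obtain ⟨hσ0, hσ1, hq0, hq1, hVc⟩ := hV
    simp only [errSum]
    rw [Finset.mul_sum]
    refine Finset.sum_congr rfl fun a _ => ?_
    rw [errSum_scale (child a) (hVc a) (ps * σ a) (pq * q a)
        (mul_pos hpq (hq0 a)),
      errSum_scale (child a) (hVc a) (1 * σ a) (1 * q a)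
        (by simpa using (hq0 a))]
    have hq' := (hq0 a).ne'
    have hpq' := hpq.ne'
    field_simp

theorem varT_bval_le : ∀ (T : GameTree), Valid T → varT T bval ≤ errSum 1 1 T
  | leaf u, _ => by simp [varT, expT, bval, errSum]
  | node n child σ q b, hV => by
    obtain ⟨hσ0, hσ1, hq0, hq1, hVc⟩ := hV
    have hVn : Valid (node n child σ q b) := ⟨hσ0, hσ1, hq0, hq1, hVc⟩
    rw [varT_eq _ hVn, expT_bval _ hVn]
    simp only [expT, eu, errSum]
    have hterm : ∀ a ∈ Finset.univ,
        q a * expT (child a) (fun t => bval (Traj.step a t : Traj (.node n child σ q b)) ^ 2)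
        = σ a ^ 2 / q a * varT (child a) bval
          + (σ a ^ 2 / q a * (eu (child a) - b a) ^ 2
            + (2 * (∑ a' : Fin (n+1), σ a' * b a') * (σ a * eu (child a))
              - 2 * (∑ a' : Fin (n+1), σ a' * b a') * (σ a * b a)
              + q a * (∑ a' : Fin (n+1), σ a' * b a') ^ 2)) := by
      intro a _
      have h2 : (fun t : Traj (child a) =>
            bval (Traj.step a t : Traj (.node n child σ q b)) ^ 2)
          = fun t => (σ a / q a * bval t
              + ((∑ a' : Fin (n+1), σ a' * b a') - σ a / q a * b a)) ^ 2 := by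
        funext t; rw [bval_step]; ring
      have hm2 : expT (child a) (fun z => bval z ^ 2)
          = varT (child a) bval + eu (child a) ^ 2 := by
        rw [varT_eq _ (hVc a), expT_bval _ (hVc a)]; ring
      rw [h2, expT_sq_affine _ (hVc a), expT_bval _ (hVc a), hm2]
      have hq' := (hq0 a).ne'
      field_simp
      ring
    rw [Finset.sum_congr rfl hterm]
    have hrhs : ∀ a ∈ Finset.univ,
        ((1 * σ a) ^ 2 / (1 * q a) * (eu (child a) - b a) ^ 2
          + errSum (1 * σ a) (1 * q a) (child a))
        = σ a ^ 2 / q a * (eu (child a) - b a) ^ 2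
          + σ a ^ 2 / q a * errSum 1 1 (child a) := by
      intro a _
      rw [errSum_scale (child a) (hVc a) (1 * σ a) (1 * q a) (by simpa using (hq0 a))]
      have hq' := (hq0 a).ne'
      field_simp
    rw [Finset.sum_congr rfl hrhs]
    simp only [Finset.sum_add_distrib, Finset.sum_sub_distrib]
    simp only [← Finset.mul_sum]
    rw [← Finset.sum_mul, hq1]
    have hA : (∑ a : Fin (n+1), σ a ^ 2 / q a * varT (child a) bval)
        ≤ ∑ a : Fin (n+1), σ a ^ 2 / q a * errSum 1 1 (child a) := by
      refine Finset.sum_le_sum fun a _ => ?_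
      exact mul_le_mul_of_nonneg_left (varT_bval_le (child a) (hVc a))
        (div_nonneg (sq_nonneg _) (hq0 a).le)
    nlinarith [sq_nonneg ((∑ a : Fin (n+1), σ a * eu (child a))
      - (∑ a' : Fin (n+1), σ a' * b a')), hA]

end GameTree

open GameTree

/-- For every internal game tree, action `a`, and arbitrary baseline, the
variance of the baseline-corrected action value is bounded by the weighted sum of squared
baseline errors over all edges at or below the edge `(root, a)`:
`Var_z[v̂(T, a; z)] ≤ Σ_{(h,a')} (π^σ(T_a-root, h·a'))²/π^q(h·a') · (û(h_{a'}) − b_h(a'))²`.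
The pair `(root, a)` contributes `1²/q_T(a) · (û(T_a) − b_T(a))²`, and the pairs `(h, a')`
with `h` internal in `T_a` contribute with σ-products taken from the root of `T_a`
(initial accumulator `1`) and q-products taken from the root of `T` (initial accumulator
`q_T(a)`). -/
theorem varAct_le_errSum (n : ℕ) (child : Fin (n + 1) → GameTree)
    (σ q b : Fin (n + 1) → ℝ)
    (hV : GameTree.Valid (.node n child σ q b)) (a : Fin (n + 1)) :
    GameTree.varT (.node n child σ q b) (GameTree.bvalAct a) ≤
      1 ^ 2 / q a * (GameTree.eu (child a) - b a) ^ 2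
        + GameTree.errSum 1 (q a) (child a) := by
  obtain ⟨hσ0, hσ1, hq0, hq1, hVc⟩ := hV
  have hVn : GameTree.Valid (.node n child σ q b) := ⟨hσ0, hσ1, hq0, hq1, hVc⟩
  have hqa := (hq0 a).ne'
  rw [varT_eq _ hVn]
  -- the mean of the action value is the expected utility of `child a`
  have hinner : ∀ a' : Fin (n+1),
      (fun t : Traj (child a') =>
          bvalAct a (Traj.step a' t : Traj (.node n child σ q b)))
      = fun t => ((if a = a' then (1:ℝ) else 0) / q a) * bval t
          + (b a - (if a = a' then (1:ℝ) else 0) / q a * b a) := by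
    intro a'
    funext t
    simp only [bvalAct]
    ring
  have hE : expT (.node n child σ q b) (bvalAct a) = eu (child a) := by
    simp only [expT]
    have h : ∀ a' ∈ Finset.univ,
        q a' * expT (child a') (fun t =>
          bvalAct a (Traj.step a' t : Traj (.node n child σ q b)))
        = (if a' = a then eu (child a) - b a else 0) + q a' * b a := by
      intro a' _
      rw [hinner a', expT_affine _ (hVc a'), expT_bval _ (hVc a')]
      by_cases h : a = a'
      · subst h
        simp only [if_pos rfl]
        field_simp
        simp only [if_true]
        ring
      · simp only [if_neg h, if_neg (Ne.symm h)]
        ring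
    rw [Finset.sum_congr rfl h, Finset.sum_add_distrib,
      Finset.sum_ite_eq' Finset.univ a, ← Finset.sum_mul, hq1]
    simp
  rw [hE]
  -- the second moment
  set V := varT (child a) bval with hVdef
  set μ := eu (child a) with hμ
  have hE2 : expT (.node n child σ q b) (fun z => bvalAct a z ^ 2)
      = (q a * ((1 / q a) ^ 2 * (V + μ ^ 2)
          + 2 * (1 / q a) * (b a - 1 / q a * b a) * μ + (b a - 1 / q a * b a) ^ 2)
          - q a * b a ^ 2) + b a ^ 2 := by
    simp only [expT]
    have h : ∀ a' ∈ Finset.univ,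
        q a' * expT (child a') (fun t =>
          bvalAct a (Traj.step a' t : Traj (.node n child σ q b)) ^ 2)
        = (if a' = a then
            q a * ((1 / q a) ^ 2 * (V + μ ^ 2)
              + 2 * (1 / q a) * (b a - 1 / q a * b a) * μ + (b a - 1 / q a * b a) ^ 2)
              - q a * b a ^ 2
          else 0) + q a' * b a ^ 2 := by
      intro a' _
      have hsq : (fun t : Traj (child a') =>
            bvalAct a (Traj.step a' t : Traj (.node n child σ q b)) ^ 2)
          = fun t => (((if a = a' then (1:ℝ) else 0) / q a) * bval t
              + (b a - (if a = a' then (1:ℝ) else 0) / q a * b a)) ^ 2 := by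
        funext t
        simp only [bvalAct]
        ring
      have hm2 : expT (child a') (fun z => bval z ^ 2)
          = varT (child a') bval + eu (child a') ^ 2 := by
        rw [varT_eq _ (hVc a'), expT_bval _ (hVc a')]; ring
      rw [hsq, expT_sq_affine _ (hVc a'), expT_bval _ (hVc a'), hm2]
      by_cases h : a = a'
      · subst h
        simp only [eq_self_iff_true, if_true]
        ring
      · simp only [if_neg h, if_neg (Ne.symm h)]
        ring
    rw [Finset.sum_congr rfl h, Finset.sum_add_distrib,
      Finset.sum_ite_eq' Finset.univ a, ← Finset.sum_mul, hq1]
    simp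
  rw [hE2, errSum_scale (child a) (hVc a) 1 (q a) (hq0 a)]
  have hVle : V ≤ errSum 1 1 (child a) := varT_bval_le _ (hVc a)
  have key : (q a * ((1 / q a) ^ 2 * (V + μ ^ 2)
        + 2 * (1 / q a) * (b a - 1 / q a * b a) * μ + (b a - 1 / q a * b a) ^ 2)
        - q a * b a ^ 2) + b a ^ 2 - μ ^ 2
      = 1 / q a * V + 1 / q a * (μ - b a) ^ 2 - (μ - b a) ^ 2 := by
    field_simp
    ring
  rw [key]
  have h1 : 1 / q a * V ≤ 1 / q a * errSum 1 1 (child a) :=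
    mul_le_mul_of_nonneg_left hVle (one_div_pos.mpr (hq0 a)).le
  have h2 : (0:ℝ) ≤ (μ - b a) ^ 2 := sq_nonneg _
  have h3 : (1:ℝ) ^ 2 / q a * (μ - b a) ^ 2 = 1 / q a * (μ - b a) ^ 2 := by ring
  have h4 : (1:ℝ) ^ 2 / q a * errSum 1 1 (child a)
      = 1 / q a * errSum 1 1 (child a) := by ring
  rw [h3, h4]
  linarith
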